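/- arXiv:2003.03308 — 2 statements merged into one kernel-verified Lean document; each statement's English description precedes it below -/
import Mathlib

section
/- Let Z be a nonempty finite type, n ≥ 1, let p be a PMF on Fin n → Z (the joint law of Z₁,…,Zₙ) with single-coordinate marginals p₁,…,pₙ, let Q₀ be a PMF on Z with Q₀(z) > 0 for all z, and let δ ≥ 0. If D(p ‖ Q₀^{⊗n}) ≤ δ, where Q₀^{⊗n}(z₁,…,zₙ) = ∏_{i=1}^n Q₀(zᵢ), then H(p̄) − (1/n)·∑_{i=1}^n H(pᵢ) ≤ δ/n, where p̄ = (1/n)·∑_{i=1}^n pᵢ. (This quantity equals the mutual information I(T; Z_T) when T is uniform on {1,…,n} and independent of (Z₁,…,Zₙ).) [Lemma 2 of the paper, third claim.] -/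
open scoped BigOperators

/-- A probability mass function on a finite type: nonnegative and sums to 1. -/
def IsPMF {A : Type*} [Fintype A] (p : A → ℝ) : Prop :=
  (∀ a, 0 ≤ p a) ∧ ∑ a, p a = 1

/-- Shannon entropy (natural log, with `0 * log 0 = 0` by Lean's conventions). -/
noncomputable def entF {A : Type*} [Fintype A] (p : A → ℝ) : ℝ :=
  -∑ a, p a * Real.log (p a)

/-- Kullback–Leibler divergence (natural log, `0 * log (0/q) = 0` by Lean's conventions). -/
noncomputable def klDivF {A : Type*} [Fintype A] (P Q : A → ℝ) : ℝ :=
  ∑ a, P a * Real.log (P a / Q a)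

/-- Pushforward (law of `f` under `p`), i.e. the marginal / induced distribution. -/
noncomputable def pushF {A B : Type*} [Fintype A] [DecidableEq B] (p : A → ℝ) (f : A → B) :
    B → ℝ :=
  fun b => ∑ a, if f a = b then p a else 0

/-- Mutual information `I(X;Y) = H(X) + H(Y) - H(X,Y)` of a joint PMF on a product type. -/
noncomputable def mutInfoF {A B : Type*} [Fintype A] [Fintype B] [DecidableEq A] [DecidableEq B]
    (p : A × B → ℝ) : ℝ :=
  entF (pushF p Prod.fst) + entF (pushF p Prod.snd) - entF p

/-- Conditional mutual information `I(X;Y|W) = H(X,W) + H(Y,W) - H(X,Y,W) - H(W)` of a joint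
PMF on `X × Y × W`. -/
noncomputable def condMIF {X Y W : Type*} [Fintype X] [Fintype Y] [Fintype W]
    [DecidableEq X] [DecidableEq Y] [DecidableEq W] (p : X × Y × W → ℝ) : ℝ :=
  entF (pushF p (fun t => (t.1, t.2.2))) + entF (pushF p (fun t => (t.2.1, t.2.2)))
    - entF p - entF (pushF p (fun t => t.2.2))

/-- Binary entropy function (natural log). -/
noncomputable def binEnt (t : ℝ) : ℝ :=
  -(t * Real.log t) - (1 - t) * Real.log (1 - t)

/-- The Bernoulli(t) PMF on `ZMod 2`, assigning probability `t` to `1`. -/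
noncomputable def bern (t : ℝ) : ZMod 2 → ℝ := fun x => if x = 1 then t else 1 - t

/-!
Write `pᵢ` for the marginals and `p̄` for their average. Against any reference law `Q₀` of full
support, the entropy gap is `(1/n) ∑ᵢ D(pᵢ‖Q₀) − D(p̄‖Q₀)`, since the cross-entropy terms
`∑ q log Q₀` are linear in `q`. Dropping `D(p̄‖Q₀) ≥ 0` leaves `(1/n) ∑ᵢ D(pᵢ‖Q₀)`, and the chain
rule `D(p‖Q₀^{⊗n}) = D(p‖p₁ ⊗ ⋯ ⊗ pₙ) + ∑ᵢ D(pᵢ‖Q₀)` bounds `∑ᵢ D(pᵢ‖Q₀)` by `D(p‖Q₀^{⊗n}) ≤ δ`.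
-/

open Finset Real

lemma sum_pushF_mul {A B : Type*} [Fintype A] [Fintype B] [DecidableEq B]
    (p : A → ℝ) (f : A → B) (g : B → ℝ) :
    ∑ b, pushF p f b * g b = ∑ a, p a * g (f a) := by
  simp only [pushF, sum_mul, ite_mul, zero_mul]
  rw [sum_comm]
  simp

lemma le_pushF_apply {A B : Type*} [Fintype A] [DecidableEq B] {p : A → ℝ}
    (hp : ∀ a, 0 ≤ p a) (f : A → B) (a : A) : p a ≤ pushF p f (f a) := by
  calc p a = if f a = f a then p a else 0 := (if_pos rfl).symm
    _ ≤ pushF p f (f a) := single_le_sum (f := fun a' => if f a' = f a then p a' else 0)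
        (fun a' _ => by split_ifs <;> simp [hp a']) (mem_univ a)

lemma IsPMF.pushF {A B : Type*} [Fintype A] [Fintype B] [DecidableEq B] {p : A → ℝ}
    (hp : IsPMF p) (f : A → B) : IsPMF (pushF p f) :=
  ⟨fun b => sum_nonneg fun a _ => by split_ifs <;> simp [hp.1 a],
    by simpa [hp.2] using sum_pushF_mul p f 1⟩

lemma IsPMF.avg {ι Z : Type*} [Fintype ι] [Nonempty ι] [Fintype Z] {q : ι → Z → ℝ}
    (hq : ∀ i, IsPMF (q i)) : IsPMF (fun z => (∑ i, q i z) / Fintype.card ι) := by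
  refine ⟨fun z => div_nonneg (sum_nonneg fun i _ => (hq i).1 z) (Nat.cast_nonneg _), ?_⟩
  rw [← sum_div, sum_comm]
  simp [fun i => (hq i).2]

lemma IsPMF.pi {ι Z : Type*} [Fintype ι] [DecidableEq ι] [Fintype Z] {q : ι → Z → ℝ}
    (hq : ∀ i, IsPMF (q i)) : IsPMF (fun f : ι → Z => ∏ i, q i (f i)) :=
  ⟨fun f => prod_nonneg fun i _ => (hq i).1 (f i),
    by rw [← Fintype.prod_sum]; simp [fun i => (hq i).2]⟩

lemma sub_le_mul_log_div {x y : ℝ} (hx : 0 ≤ x) (hy : 0 ≤ y) (hxy : y = 0 → x = 0) :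
    x - y ≤ x * log (x / y) := by
  rcases hx.eq_or_lt with rfl | hx
  · simpa using hy
  have hy : 0 < y := hy.lt_of_ne' fun h => hx.ne' (hxy h)
  calc x - y = x * (1 - (x / y)⁻¹) := by field_simp
    _ ≤ x * log (x / y) := by gcongr; exact one_sub_inv_le_log_of_pos (by positivity)

lemma klDivF_nonneg {A : Type*} [Fintype A] {P Q : A → ℝ} (hP : IsPMF P) (hQ : IsPMF Q)
    (hPQ : ∀ a, Q a = 0 → P a = 0) : 0 ≤ klDivF P Q := by
  have := sum_le_sum fun a (_ : a ∈ univ) => sub_le_mul_log_div (hP.1 a) (hQ.1 a) (hPQ a)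
  rwa [sum_sub_distrib, hP.2, hQ.2, sub_self] at this

lemma klDivF_eq_sub {A : Type*} [Fintype A] {P Q : A → ℝ} (hPQ : ∀ a, P a ≠ 0 → Q a ≠ 0) :
    klDivF P Q = ∑ a, P a * log (P a) - ∑ a, P a * log (Q a) := by
  rw [klDivF, ← sum_sub_distrib]
  refine sum_congr rfl fun a _ => ?_
  by_cases h : P a = 0
  · simp [h]
  · rw [log_div h (hPQ a h)]; ring

lemma entF_avg_sub_eq {ι Z : Type*} [Fintype ι] [Fintype Z] (q : ι → Z → ℝ) {Q : Z → ℝ}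
    (hQ : ∀ z, Q z ≠ 0) :
    entF (fun z => (∑ i, q i z) / Fintype.card ι) - (1 / Fintype.card ι) * ∑ i, entF (q i)
      = (1 / Fintype.card ι) * ∑ i, klDivF (q i) Q
        - klDivF (fun z => (∑ i, q i z) / Fintype.card ι) Q := by
  have cross : ∑ z, (∑ i, q i z) / Fintype.card ι * log (Q z)
      = (1 / Fintype.card ι) * ∑ i, ∑ z, q i z * log (Q z) := by
    rw [one_div_mul_eq_div, sum_comm]
    simp only [div_mul_eq_mul_div, sum_mul, ← sum_div]
  simp only [entF, klDivF_eq_sub fun z _ => hQ z, cross, sum_sub_distrib, sum_neg_distrib]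
  ring

section Marginals

variable {ι Z : Type*} [Fintype ι] [DecidableEq ι] [Fintype Z] [DecidableEq Z]

lemma sum_mul_log_prod_eq_sum_pushF {p : (ι → Z) → ℝ} {q : ι → Z → ℝ}
    (hq : ∀ f, p f ≠ 0 → ∀ i, q i (f i) ≠ 0) :
    ∑ f, p f * log (∏ i, q i (f i)) = ∑ i, ∑ z, pushF p (fun f => f i) z * log (q i z) := by
  have hsplit : ∀ f, p f * log (∏ i, q i (f i)) = ∑ i, p f * log (q i (f i)) := fun f => by
    by_cases hf : p f = 0
    · simp [hf]
    · rw [log_prod fun i _ => hq f hf i, mul_sum]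
  simp only [hsplit, sum_pushF_mul]
  exact sum_comm

lemma klDivF_pi_eq_add {p : (ι → Z) → ℝ} (hp : ∀ f, 0 ≤ p f) {Q : Z → ℝ}
    (hQ : ∀ z, Q z ≠ 0) :
    klDivF p (fun f => ∏ i, Q (f i))
      = klDivF p (fun f => ∏ i, pushF p (fun f => f i) (f i))
        + ∑ i, klDivF (pushF p (fun f => f i)) Q := by
  have hmarg : ∀ f, p f ≠ 0 → ∀ i, pushF p (fun f => f i) (f i) ≠ 0 := fun f hf i =>
    ((lt_of_le_of_ne (hp f) (Ne.symm hf)).trans_le (le_pushF_apply hp _ f)).ne'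
  rw [klDivF_eq_sub fun f _ => prod_ne_zero_iff.2 fun i _ => hQ (f i),
    klDivF_eq_sub fun f hf => prod_ne_zero_iff.2 fun i _ => hmarg f hf i,
    sum_mul_log_prod_eq_sum_pushF fun f _ i => hQ (f i), sum_mul_log_prod_eq_sum_pushF hmarg]
  simp only [klDivF_eq_sub fun z _ => hQ z, sum_sub_distrib]
  ring

lemma sum_klDivF_pushF_le {p : (ι → Z) → ℝ} (hp : IsPMF p) {Q : Z → ℝ} (hQ : ∀ z, Q z ≠ 0) :
    ∑ i, klDivF (pushF p (fun f => f i)) Q ≤ klDivF p (fun f => ∏ i, Q (f i)) := by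
  have hgibbs : 0 ≤ klDivF p (fun f => ∏ i, pushF p (fun f => f i) (f i)) := by
    refine klDivF_nonneg hp (IsPMF.pi fun i => hp.pushF _) fun f hf => ?_
    obtain ⟨i, -, hi⟩ := prod_eq_zero_iff.1 hf
    exact le_antisymm (hi ▸ le_pushF_apply hp.1 _ f) (hp.1 f)
  rw [klDivF_pi_eq_add hp.1 hQ]
  linarith

end Marginals

theorem avg_entropy_gap_le_general {Z : Type*} [Fintype Z] [DecidableEq Z]
    (n : ℕ) (hn : 1 ≤ n)
    (p : (Fin n → Z) → ℝ) (hp : IsPMF p)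
    (Q₀ : Z → ℝ) (hQ₀ : IsPMF Q₀) (hQ₀pos : ∀ z, 0 < Q₀ z)
    (δ : ℝ)
    (h : klDivF p (fun f => ∏ i, Q₀ (f i)) ≤ δ) :
    entF (fun z => (∑ i : Fin n, pushF p (fun f => f i) z) / n)
        - (1 / n) * ∑ i : Fin n, entF (pushF p (fun f => f i)) ≤ δ / n := by
  have : Nonempty (Fin n) := ⟨⟨0, hn⟩⟩
  have hQ₀ne : ∀ z, Q₀ z ≠ 0 := fun z => (hQ₀pos z).ne'
  have hgap := entF_avg_sub_eq (fun i => pushF p (fun f : Fin n → Z => f i)) hQ₀ne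
  have hmix := IsPMF.avg fun i => hp.pushF (fun f : Fin n → Z => f i)
  rw [Fintype.card_fin] at hgap hmix
  rw [hgap]
  calc _ ≤ (1 / n) * ∑ i, klDivF (pushF p fun f => f i) Q₀ :=
        sub_le_self _ (klDivF_nonneg hmix hQ₀ fun z hz => absurd hz (hQ₀ne z))
    _ ≤ (1 / n) * δ := by gcongr; exact (sum_klDivF_pushF_le hp hQ₀ne).trans h
    _ = δ / n := one_div_mul_eq_div _ _

/-- Lemma 2, third claim: if `D(p ‖ Q₀^{⊗n}) ≤ δ` then the mutual information
`I(T; Z_T) = H(p̄) − (1/n)∑ᵢ H(pᵢ)` (with `T` uniform and independent) is at most `δ/n`,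
where `pᵢ` are the single-coordinate marginals and `p̄` their average. -/
theorem avg_entropy_gap_le {Z : Type*} [Fintype Z] [Nonempty Z] [DecidableEq Z]
    (n : ℕ) (hn : 1 ≤ n)
    (p : (Fin n → Z) → ℝ) (hp : IsPMF p)
    (Q₀ : Z → ℝ) (hQ₀ : IsPMF Q₀) (hQ₀pos : ∀ z, 0 < Q₀ z)
    (δ : ℝ) (hδ : 0 ≤ δ)
    (h : klDivF p (fun f => ∏ i, Q₀ (f i)) ≤ δ) :
    entF (fun z => (∑ i : Fin n, pushF p (fun f => f i) z) / n)
        - (1 / n) * ∑ i : Fin n, entF (pushF p (fun f => f i)) ≤ δ / n :=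
  avg_entropy_gap_le_general n hn p hp Q₀ hQ₀ hQ₀pos δ h
end

section
/- Let α, β ∈ [0,1] and let p be the product PMF on (ZMod 2)² of Bernoulli(α) and Bernoulli(β) (the law of independent (U,S₂) with P(U=1) = α and P(S₂=1) = β). Then the mutual information I(U ; U ⊕ S₂), computed from the induced joint law of (U, U ⊕ S₂), equals h(η) − h(β), where η = αβ + (1−α)(1−β). [Rate computation for the reverse degraded channel with binary additive state, Proposition 4 of the paper.] -/
open scoped BigOperators

/-! The map `(u, s) ↦ (u, u + s)` is a bijection of `(ZMod 2)²`, so the joint entropy of `(U, U ⊕ S₂)`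
is that of the independent pair `(U, S₂)`, namely `h(α) + h(β)`. The marginals are `Bernoulli(α)` and
`Bernoulli(1 - η)`, and `h(1 - η) = h(η)`. -/

open Finset

lemma entF_eq_sum_negMulLog {A : Type*} [Fintype A] (p : A → ℝ) :
    entF p = ∑ a, Real.negMulLog (p a) := by
  simp [entF, Real.negMulLog_eq_neg]

lemma binEnt_eq_binEntropy : binEnt = Real.binEntropy := by
  ext t
  simp only [binEnt, Real.binEntropy, Real.log_inv]
  ring

lemma binEnt_one_sub (t : ℝ) : binEnt (1 - t) = binEnt t := by
  simp only [binEnt_eq_binEntropy, Real.binEntropy_one_sub]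

lemma sum_zmod_two {M : Type*} [AddCommMonoid M] (f : ZMod 2 → M) : ∑ x, f x = f 0 + f 1 :=
  Fin.sum_univ_two f

lemma sum_bern (t : ℝ) : ∑ x, bern t x = 1 := by
  simp [bern, sum_zmod_two]

lemma entF_bern (t : ℝ) : entF (bern t) = binEnt t := by
  simp only [entF, binEnt, bern, sum_zmod_two, zero_ne_one, ↓reduceIte]
  ring

section Pushforward

variable {A B C : Type*} [Fintype A] [Fintype B] [DecidableEq B] [DecidableEq C]

lemma pushF_pushF (p : A → ℝ) (f : A → B) (g : B → C) :
    pushF (pushF p f) g = pushF p (g ∘ f) := by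
  ext c
  simp only [pushF, Function.comp_apply, ite_sum_zero]
  rw [sum_comm]
  refine sum_congr rfl fun a _ => ?_
  rw [sum_eq_single (f a) (fun b _ hb => by simp [hb.symm]) (by simp)]
  simp

lemma pushF_equiv (p : A → ℝ) (e : A ≃ B) : pushF p e = p ∘ e.symm := by
  ext b
  simp only [pushF, Function.comp_apply]
  rw [← e.symm.sum_comp]
  simp

lemma entF_pushF_equiv (p : A → ℝ) (e : A ≃ B) : entF (pushF p e) = entF p := by
  rw [entF_eq_sum_negMulLog, entF_eq_sum_negMulLog, pushF_equiv]
  exact e.symm.sum_comp fun a => Real.negMulLog (p a)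

end Pushforward

section Product

variable {A B : Type*} [Fintype A] [Fintype B]

lemma pushF_mul_fst [DecidableEq A] (p : A → ℝ) {q : B → ℝ} (hq : ∑ b, q b = 1) :
    pushF (fun ab : A × B => p ab.1 * q ab.2) Prod.fst = p := by
  ext a
  simp [pushF, Fintype.sum_prod_type, ← mul_sum, hq]

lemma entF_mul {p : A → ℝ} {q : B → ℝ} (hp : ∑ a, p a = 1) (hq : ∑ b, q b = 1) :
    entF (fun ab : A × B => p ab.1 * q ab.2) = entF p + entF q := by
  simp only [entF_eq_sum_negMulLog, Fintype.sum_prod_type, Real.negMulLog_mul, sum_add_distrib,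
    ← sum_mul, ← mul_sum, hp, hq, one_mul]

end Product

lemma pushF_bern_mul_bern_add (α β : ℝ) :
    pushF (fun us : ZMod 2 × ZMod 2 => bern α us.1 * bern β us.2) (fun us => us.1 + us.2)
      = bern (α * (1 - β) + (1 - α) * β) := by
  ext x
  obtain rfl | rfl : x = 0 ∨ x = 1 := by decide +revert
  all_goals simp +decide [pushF, bern, Fintype.sum_prod_type, sum_zmod_two]; ring

theorem mutInfo_xor_bernoulli_general (α β : ℝ) :
    mutInfoF (pushF (fun us : ZMod 2 × ZMod 2 => bern α us.1 * bern β us.2)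
        (fun us => (us.1, us.1 + us.2)))
      = binEnt (α * β + (1 - α) * (1 - β)) - binEnt β := by
  set p := fun us : ZMod 2 × ZMod 2 => bern α us.1 * bern β us.2
  let shear : ZMod 2 × ZMod 2 ≃ ZMod 2 × ZMod 2 := Equiv.prodShear (Equiv.refl _) Equiv.addLeft
  have hshear : (fun us : ZMod 2 × ZMod 2 => (us.1, us.1 + us.2)) = shear := rfl
  have hU : pushF (pushF p shear) Prod.fst = bern α := by
    rw [pushF_pushF]
    exact pushF_mul_fst _ (sum_bern β)
  have hX : pushF (pushF p shear) Prod.snd = bern (α * (1 - β) + (1 - α) * β) := by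
    rw [pushF_pushF]
    exact pushF_bern_mul_bern_add α β
  have hUX : entF (pushF p shear) = binEnt α + binEnt β := by
    rw [entF_pushF_equiv, entF_mul (sum_bern α) (sum_bern β), entF_bern, entF_bern]
  have hη : 1 - (α * (1 - β) + (1 - α) * β) = α * β + (1 - α) * (1 - β) := by ring
  rw [hshear, mutInfoF, hU, hX, hUX, entF_bern, entF_bern, ← hη, binEnt_one_sub]
  ring

/-- Rate computation for the reverse degraded channel (Proposition 4): if `(U,S₂)` are
independent `Bernoulli(α)` and `Bernoulli(β)`, then
`I(U ; U ⊕ S₂) = h(η) − h(β)` where `η = αβ + (1−α)(1−β)`. -/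
theorem mutInfo_xor_bernoulli (α β : ℝ) (hα : 0 ≤ α ∧ α ≤ 1) (hβ : 0 ≤ β ∧ β ≤ 1) :
    mutInfoF (pushF (fun us : ZMod 2 × ZMod 2 => bern α us.1 * bern β us.2)
        (fun us => (us.1, us.1 + us.2)))
      = binEnt (α * β + (1 - α) * (1 - β)) - binEnt β :=
  mutInfo_xor_bernoulli_general α β
end
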